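/- Orthogonal coordinate system theorem: let σ be a partition of a finite set N into nonempty disjoint blocks. Then the intervals [⋁_{S∈σ} κ_S, ⨉_{S∈σ} κ_S], ranging over all families (κ_S)_{S∈σ} where κ_S is an antichain of subsets of S with span S, form a partition of the set Υ_N of antichains of subsets of N with span N. -/

import Mathlib

open Finset

/-- Families of finite subsets of ℕ. -/
abbrev Fam := Finset (Finset ℕ)

/-- `α` is an antichain of subsets of `N`: all members are subsets of `N`
and no member is a (proper) subset of another. -/
def IsAC (N : Finset ℕ) (α : Fam) : Prop :=
  (∀ A ∈ α, A ⊆ N) ∧ ∀ A ∈ α, ∀ B ∈ α, A ⊆ B → A = B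

instance (N : Finset ℕ) : DecidablePred (IsAC N) := fun α => by
  unfold IsAC; infer_instance

/-- The partial order on antichains: every member of `α` is contained in some member of `β`. -/
def amle (α β : Fam) : Prop := ∀ A ∈ α, ∃ B ∈ β, A ⊆ B

instance (α β : Fam) : Decidable (amle α β) := by
  unfold amle; infer_instance

/-- `sup` of a family: its maximal elements under inclusion. -/
def maxels (S : Fam) : Fam := S.filter (fun A => ∀ B ∈ S, A ⊆ B → A = B)

/-- The span of an antichain: the union of its members. -/
def sp (α : Fam) : Finset ℕ := α.sup id

/-- Join: maximal elements of the union. -/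
def joinAC (α β : Fam) : Fam := maxels (α ∪ β)

/-- Meet: maximal elements of the pairwise intersections. -/
def meetAC (α β : Fam) : Fam := maxels ((α ×ˢ β).image fun p => p.1 ∩ p.2)

/-- Projection onto `M`: maximal elements of {A ∩ M : A ∈ α}. -/
def proj (M : Finset ℕ) (α : Fam) : Fam := maxels (α.image (· ∩ M))

/-- External product. -/
def xprod (α β : Fam) : Fam :=
  maxels ((α ×ˢ β).image fun p => (p.1 \ sp β) ∪ (p.2 \ sp α) ∪ (p.1 ∩ p.2))

/-- The finite set of all antichains of subsets of `N`. -/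
def AMTf (N : Finset ℕ) : Finset Fam := N.powerset.powerset.filter (IsAC N)

/-- The interval `[a, b]` inside `AMTf N`, as a `Finset`. -/
def intervalF (N : Finset ℕ) (a b : Fam) : Finset Fam :=
  (AMTf N).filter (fun κ => amle a κ ∧ amle κ b)

/-- The interval `[a, b]` of antichains of subsets of `N`, as a `Set`. -/
def intervalSet (N : Finset ℕ) (a b : Fam) : Set Fam :=
  {κ | IsAC N κ ∧ amle a κ ∧ amle κ b}

/-- n-ary join of a family indexed by the members of `σ`. -/
def bigJoin (σ : Fam) (κ : Finset ℕ → Fam) : Fam := maxels (σ.sup κ)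

/-- n-ary external product of a family indexed by the members of `σ`. -/
noncomputable def bigX (σ : Fam) (κ : Finset ℕ → Fam) : Fam :=
  (σ.toList.map κ).foldr xprod {(∅ : Finset ℕ)}

/-- Nonempty antichains of subsets of `S` with span exactly `S`. -/
def Upsf (S : Finset ℕ) : Finset Fam :=
  S.powerset.powerset.filter (fun κ => IsAC S κ ∧ κ ≠ ∅ ∧ sp κ = S)

/-!
Because the blocks of `σ` are disjoint, the external product `⨉_S κ_S` consists exactly of the
sets `X ⊆ N` with `X ∩ S ∈ κ_S` for every block `S`. Write `γ|_S` for the maximal elements of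
`{A ∩ S : A ∈ γ}`. If `⋁ κ_S ≤ γ ≤ ⨉ κ_S`, then `κ_S ≤ γ` gives `κ_S ≤ γ|_S`, and every `A ∩ S`
with `A ∈ γ` lies in some `X ∩ S ∈ κ_S`, so `γ|_S ≤ κ_S`; hence `γ|_S = κ_S`, and the intervals are
pairwise disjoint. Conversely every `γ ∈ Υ_N` lies in the interval of the family `(γ|_S)_S`: each
`C ∈ γ` is covered by the union of members `D_S ∈ γ|_S` with `C ∩ S ⊆ D_S`, and that union is a
member of `⨉_S γ|_S`. The intervals are nonempty because blocks are nonempty, so that every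
`κ_S` is nonempty and each member of `⋁ κ_S` extends to a member of `⨉ κ_S`.
-/

section Antichains

variable {N M : Finset ℕ} {α β γ S : Fam} {A : Finset ℕ}

lemma isAC_iff : IsAC N α ↔ (∀ A ∈ α, A ⊆ N) ∧ IsAntichain (· ⊆ ·) (α : Set (Finset ℕ)) :=
  and_congr_right fun _ => ⟨fun h _ hA _ hB hne hAB => hne (h _ hA _ hB hAB),
    fun h _ hA _ hB hAB => h.eq hA hB hAB⟩

lemma mem_maxels : A ∈ maxels S ↔ Maximal (· ∈ S) A := by
  simp only [maxels, mem_filter, Maximal]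
  exact and_congr_right fun _ => forall₂_congr fun B _ =>
    imp_congr_right fun hAB => ⟨fun h => h ▸ le_rfl, fun h => le_antisymm hAB h⟩

lemma isAntichain_maxels (S : Fam) : IsAntichain (· ⊆ ·) (maxels S : Set (Finset ℕ)) := by
  convert setOfPred_maximal_antichain (· ∈ S) using 1
  ext; exact mem_maxels

lemma exists_mem_maxels_superset (hA : A ∈ S) : ∃ B ∈ maxels S, A ⊆ B := by
  obtain ⟨B, hAB, hB⟩ := S.exists_le_maximal hA
  exact ⟨B, mem_maxels.2 hB, hAB⟩

lemma mem_sp : ∀ {n : ℕ}, n ∈ sp α ↔ ∃ A ∈ α, n ∈ A := Finset.mem_sup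

lemma subset_sp (hA : A ∈ α) : A ⊆ sp α := Finset.le_sup (f := id) hA

lemma sp_subset_iff : sp α ⊆ N ↔ ∀ A ∈ α, A ⊆ N := Finset.sup_le_iff

lemma amle_of_subset (h : α ⊆ β) : amle α β := fun A hA => ⟨A, h hA, subset_rfl⟩

lemma amle_trans (h₁ : amle α β) (h₂ : amle β γ) : amle α γ := fun A hA =>
  let ⟨B, hB, hAB⟩ := h₁ A hA
  let ⟨C, hC, hBC⟩ := h₂ B hB
  ⟨C, hC, hAB.trans hBC⟩

lemma amle_antisymm (hα : IsAntichain (· ⊆ ·) (α : Set (Finset ℕ)))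
    (hβ : IsAntichain (· ⊆ ·) (β : Set (Finset ℕ))) (h₁ : amle α β) (h₂ : amle β α) : α = β := by
  have key : ∀ {α β : Fam}, IsAntichain (· ⊆ ·) (α : Set (Finset ℕ)) →
      amle α β → amle β α → α ⊆ β := fun hα h₁ h₂ A hA => by
    obtain ⟨B, hB, hAB⟩ := h₁ A hA
    obtain ⟨C, hC, hBC⟩ := h₂ B hB
    obtain rfl : A = C := hα.eq hA hC (hAB.trans hBC)
    rwa [hAB.antisymm hBC]
  exact (key hα h₁ h₂).antisymm (key hβ h₂ h₁)

lemma sp_mono_of_amle (h : amle α β) : sp α ⊆ sp β := sp_subset_iff.2 fun A hA =>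
  let ⟨_, hB, hAB⟩ := h A hA
  hAB.trans (subset_sp hB)

lemma maxels_amle_iff : amle (maxels S) γ ↔ amle S γ :=
  ⟨amle_trans fun _ hA => exists_mem_maxels_superset hA,
    amle_trans (amle_of_subset (filter_subset _ _))⟩

lemma exists_mem_proj_superset (hA : A ∈ γ) : ∃ D ∈ proj M γ, A ∩ M ⊆ D :=
  exists_mem_maxels_superset (mem_image_of_mem _ hA)

lemma exists_eq_inter_of_mem_proj (hA : A ∈ proj M γ) : ∃ C ∈ γ, C ∩ M = A :=
  mem_image.1 (filter_subset _ _ hA)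

lemma isAC_proj : IsAC M (proj M γ) := by
  refine isAC_iff.2 ⟨fun A hA => ?_, isAntichain_maxels _⟩
  obtain ⟨C, -, rfl⟩ := exists_eq_inter_of_mem_proj hA
  exact inter_subset_right

lemma sp_proj : sp (proj M γ) = sp γ ∩ M := by
  refine subset_antisymm (sp_subset_iff.2 fun A hA => ?_) fun n hn => ?_
  · obtain ⟨C, hC, rfl⟩ := exists_eq_inter_of_mem_proj hA
    exact inter_subset_inter_right (subset_sp hC)
  · obtain ⟨hnγ, hnM⟩ := mem_inter.1 hn
    obtain ⟨C, hC, hnC⟩ := mem_sp.1 hnγ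
    obtain ⟨D, hD, hCD⟩ := exists_mem_proj_superset (M := M) hC
    exact subset_sp hD (hCD (mem_inter.2 ⟨hnC, hnM⟩))

lemma amle_proj_self : amle (proj M γ) γ := fun _ hA =>
  let ⟨C, hC, hCA⟩ := exists_eq_inter_of_mem_proj hA
  ⟨C, hC, hCA ▸ inter_subset_left⟩

lemma amle_proj_of_amle (h : amle α γ) (hα : ∀ A ∈ α, A ⊆ M) : amle α (proj M γ) := by
  intro A hA
  obtain ⟨C, hC, hAC⟩ := h A hA
  obtain ⟨D, hD, hCD⟩ := exists_mem_proj_superset (M := M) hC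
  exact ⟨D, hD, (subset_inter hAC (hα A hA)).trans hCD⟩

lemma proj_amle_of_amle (h : amle γ β) (hβ : ∀ X ∈ β, X ∩ M ∈ α) : amle (proj M γ) α := by
  intro A hA
  obtain ⟨C, hC, rfl⟩ := exists_eq_inter_of_mem_proj hA
  obtain ⟨X, hX, hCX⟩ := h C hC
  exact ⟨X ∩ M, hβ X hX, inter_subset_inter_right hCX⟩

end Antichains

section Product

variable {α β Q : Fam} {ls : List Fam}

lemma union_inter_eq_left_of_disjoint {A B P : Finset ℕ} (hA : A ⊆ P) (hB : Disjoint B P) :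
    (A ∪ B) ∩ P = A := by
  rw [union_inter_distrib_right, inter_eq_left.2 hA, disjoint_iff_inter_eq_empty.1 hB,
    union_empty]

lemma xprod_eq_image₂_union (hα : IsAntichain (· ⊆ ·) (α : Set (Finset ℕ)))
    (hβ : IsAntichain (· ⊆ ·) (β : Set (Finset ℕ))) (h : Disjoint (sp α) (sp β)) :
    xprod α β = image₂ (· ∪ ·) α β := by
  have hsliceα : ∀ {A B}, A ∈ α → B ∈ β → (A ∪ B) ∩ sp α = A := fun hA hB =>
    union_inter_eq_left_of_disjoint (subset_sp hA) (h.symm.mono_left (subset_sp hB))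
  have hsliceβ : ∀ {A B}, A ∈ α → B ∈ β → (A ∪ B) ∩ sp β = B := fun hA hB => by
    rw [union_comm]
    exact union_inter_eq_left_of_disjoint (subset_sp hB) (h.mono_left (subset_sp hA))
  have himage : (α ×ˢ β).image (fun p => (p.1 \ sp β) ∪ (p.2 \ sp α) ∪ (p.1 ∩ p.2)) =
      image₂ (· ∪ ·) α β := by
    rw [← image_uncurry_product]
    refine image_congr fun p hp => ?_
    obtain ⟨hp₁, hp₂⟩ := mem_product.1 hp
    rw [sdiff_eq_self_of_disjoint (h.mono_left (subset_sp hp₁)),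
      sdiff_eq_self_of_disjoint (h.symm.mono_left (subset_sp hp₂)),
      union_eq_left.2 inter_subset_union]
    rfl
  rw [xprod, himage]
  refine filter_true_of_mem fun X hX Y hY hXY => ?_
  obtain ⟨A, hA, B, hB, rfl⟩ := mem_image₂.1 hX
  obtain ⟨A', hA', B', hB', rfl⟩ := mem_image₂.1 hY
  have hAA' : A = A' := hα.eq hA hA' <| by
    simpa only [hsliceα hA hB, hsliceα hA' hB'] using inter_subset_inter_right (u := sp α) hXY
  have hBB' : B = B' := hβ.eq hB hB' <| by
    simpa only [hsliceβ hA hB, hsliceβ hA' hB'] using inter_subset_inter_right (u := sp β) hXY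
  rw [hAA', hBB']

lemma isAntichain_of_forall_inter_mem (hanti : ∀ α ∈ ls, IsAntichain (· ⊆ ·) (α : Set (Finset ℕ)))
    (hcov : ∀ Y ∈ Q, ∀ x ∈ Y, ∃ α ∈ ls, x ∈ sp α) (hinter : ∀ Y ∈ Q, ∀ α ∈ ls, Y ∩ sp α ∈ α) :
    IsAntichain (· ⊆ ·) (Q : Set (Finset ℕ)) := by
  intro Y hY Y' hY' hne hYY'
  refine hne (hYY'.antisymm fun x hx => ?_)
  obtain ⟨α, hα, hxα⟩ := hcov Y' hY' x hx
  have hslice : Y ∩ sp α = Y' ∩ sp α :=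
    (hanti α hα).eq (hinter Y hY α hα) (hinter Y' hY' α hα) (inter_subset_inter_right hYY')
  exact (mem_inter.1 (hslice ▸ mem_inter.2 ⟨hx, hxα⟩)).1

lemma disjoint_sp_of_forall_exists (hcov : ∀ Y ∈ Q, ∀ x ∈ Y, ∃ β ∈ ls, x ∈ sp β)
    (hα : ∀ β ∈ ls, Disjoint (sp α) (sp β)) : Disjoint (sp α) (sp Q) := by
  refine disjoint_left.2 fun x hxα hxQ => ?_
  obtain ⟨Y, hY, hxY⟩ := mem_sp.1 hxQ
  obtain ⟨β, hβ, hxβ⟩ := hcov Y hY x hxY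
  exact disjoint_left.1 (hα β hβ) hxα hxβ

lemma mem_foldr_xprod_iff (hanti : ∀ α ∈ ls, IsAntichain (· ⊆ ·) (α : Set (Finset ℕ)))
    (hd : ls.Pairwise fun α β => Disjoint (sp α) (sp β)) {X : Finset ℕ} :
    X ∈ ls.foldr xprod {∅} ↔ (∀ x ∈ X, ∃ α ∈ ls, x ∈ sp α) ∧ ∀ α ∈ ls, X ∩ sp α ∈ α := by
  induction ls generalizing X with
  | nil => simp [eq_empty_iff_forall_notMem]
  | cons α t ih =>
    obtain ⟨hαt, ht⟩ := List.pairwise_cons.1 hd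
    have hanti_t : ∀ β ∈ t, IsAntichain (· ⊆ ·) (β : Set (Finset ℕ)) :=
      fun β hβ => hanti β (List.mem_cons_of_mem _ hβ)
    replace ih := @ih hanti_t ht
    set Q := t.foldr xprod {∅}
    have hQ : Disjoint (sp α) (sp Q) := disjoint_sp_of_forall_exists (fun Y hY => (ih.1 hY).1) hαt
    have hQanti : IsAntichain (· ⊆ ·) (Q : Set (Finset ℕ)) :=
      isAntichain_of_forall_inter_mem hanti_t (fun Y hY => (ih.1 hY).1) fun Y hY => (ih.1 hY).2
    rw [List.foldr_cons, xprod_eq_image₂_union (hanti α List.mem_cons_self) hQanti hQ,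
      mem_image₂]
    constructor
    · rintro ⟨A, hA, Y, hY, rfl⟩
      refine ⟨fun x hx => ?_, fun β hβ => ?_⟩
      · rcases mem_union.1 hx with hxA | hxY
        · exact ⟨α, List.mem_cons_self, subset_sp hA hxA⟩
        · obtain ⟨β, hβ, hxβ⟩ := (ih.1 hY).1 x hxY
          exact ⟨β, List.mem_cons_of_mem _ hβ, hxβ⟩
      rcases List.mem_cons.1 hβ with rfl | hβ
      · rwa [union_inter_eq_left_of_disjoint (subset_sp hA) (hQ.mono_right (subset_sp hY)).symm]
      · rw [union_inter_distrib_right,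
          disjoint_iff_inter_eq_empty.1 ((hαt β hβ).mono_left (subset_sp hA)), empty_union]
        exact (ih.1 hY).2 β hβ
    · rintro ⟨hcov, hinter⟩
      refine ⟨X ∩ sp α, hinter α List.mem_cons_self, X \ sp α,
        ih.2 ⟨fun x hx => ?_, fun β hβ => ?_⟩, sup_inf_sdiff X (sp α)⟩
      · obtain ⟨hxX, hxα⟩ := mem_sdiff.1 hx
        obtain ⟨β, hβ, hxβ⟩ := hcov x hxX
        rcases List.mem_cons.1 hβ with rfl | hβ
        · exact absurd hxβ hxα
        · exact ⟨β, hβ, hxβ⟩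
      · rw [sdiff_inter_right_comm,
          sdiff_eq_self_of_disjoint ((hαt β hβ).symm.mono_left inter_subset_right)]
        exact hinter β (List.mem_cons_of_mem _ hβ)

end Product

section Partition

variable {N : Finset ℕ} {σ : Fam} {κ : Finset ℕ → Fam} {γ β : Fam} {C X : Finset ℕ}

/-- Membership in `Υ_S`. -/
def IsSpanningAC (S : Finset ℕ) (α : Fam) : Prop := IsAC S α ∧ sp α = S

lemma IsSpanningAC.nonempty {S : Finset ℕ} {α : Fam} (h : IsSpanningAC S α) (hS : S.Nonempty) :
    α.Nonempty := by
  obtain ⟨x, hx⟩ := hS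
  rw [← h.2] at hx
  obtain ⟨A, hA, -⟩ := mem_sp.1 hx
  exact ⟨A, hA⟩

lemma mem_bigX_iff (hσ : (σ : Set (Finset ℕ)).PairwiseDisjoint id)
    (hκ : ∀ S ∈ σ, IsSpanningAC S (κ S)) :
    X ∈ bigX σ κ ↔ X ⊆ σ.sup id ∧ ∀ S ∈ σ, X ∩ S ∈ κ S := by
  have hanti : ∀ α ∈ σ.toList.map κ, IsAntichain (· ⊆ ·) (α : Set (Finset ℕ)) := by
    simp only [List.forall_mem_map, mem_toList]
    exact fun S hS => (isAC_iff.1 (hκ S hS).1).2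
  have hd : (σ.toList.map κ).Pairwise fun α β => Disjoint (sp α) (sp β) := by
    rw [List.pairwise_map]
    refine σ.nodup_toList.imp_of_mem fun hS hT hST => ?_
    rw [mem_toList] at hS hT
    rw [(hκ _ hS).2, (hκ _ hT).2]
    exact hσ hS hT hST
  rw [bigX, mem_foldr_xprod_iff hanti hd, subset_iff]
  simp only [List.mem_map, exists_exists_and_eq_and, forall_exists_index, and_imp,
    forall_apply_eq_imp_iff₂, mem_toList, mem_sup, id]
  refine and_congr (forall₂_congr fun x _ => exists_congr fun S => and_congr_right fun hS => ?_)
    (forall₂_congr fun S hS => ?_) <;> rw [(hκ S hS).2]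

lemma exists_mem_bigX_superset (hσ : (σ : Set (Finset ℕ)).PairwiseDisjoint id)
    (hκ : ∀ S ∈ σ, IsSpanningAC S (κ S)) (hC : C ⊆ σ.sup id)
    (h : ∀ S ∈ σ, ∃ D ∈ κ S, C ∩ S ⊆ D) : ∃ X ∈ bigX σ κ, C ⊆ X := by
  choose! D hD hCD using h
  have hDS : ∀ S ∈ σ, D S ⊆ S := fun S hS => (hκ S hS).1.1 _ (hD S hS)
  have hslice : ∀ S ∈ σ, σ.sup D ∩ S = D S := fun S hS => by
    refine subset_antisymm (fun x hx => ?_) (subset_inter (le_sup (f := D) hS) (hDS S hS))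
    obtain ⟨hxD, hxS⟩ := mem_inter.1 hx
    obtain ⟨T, hT, hxT⟩ := mem_sup.1 hxD
    obtain rfl : T = S := by
      by_contra hTS
      exact disjoint_left.1 (hσ hT hS hTS) (hDS T hT hxT) hxS
    exact hxT
  refine ⟨σ.sup D, (mem_bigX_iff hσ hκ).2 ⟨sup_mono_fun hDS, fun S hS => hslice S hS ▸ hD S hS⟩,
    fun x hx => ?_⟩
  obtain ⟨S, hS, hxS⟩ := mem_sup.1 (hC hx)
  exact le_sup (f := D) hS (hCD S hS (mem_inter.2 ⟨hx, hxS⟩))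

lemma bigJoin_amle_iff : amle (bigJoin σ κ) γ ↔ ∀ S ∈ σ, amle (κ S) γ := by
  rw [bigJoin, maxels_amle_iff]
  constructor
  · exact fun h S hS A hA => h A (mem_sup.2 ⟨S, hS, hA⟩)
  · intro h A hA
    obtain ⟨S, hS, hAS⟩ := mem_sup.1 hA
    exact h S hS A hAS

lemma isAC_bigJoin (hκ : ∀ S ∈ σ, ∀ A ∈ κ S, A ⊆ N) : IsAC N (bigJoin σ κ) := by
  refine isAC_iff.2 ⟨fun A hA => ?_, isAntichain_maxels _⟩
  obtain ⟨S, hS, hAS⟩ := mem_sup.1 (filter_subset _ _ hA)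
  exact hκ S hS A hAS

lemma bigJoin_mem_intervalSet (hne : ∀ S ∈ σ, S.Nonempty)
    (hσ : (σ : Set (Finset ℕ)).PairwiseDisjoint id) (hκ : ∀ S ∈ σ, IsSpanningAC S (κ S)) :
    bigJoin σ κ ∈ intervalSet (σ.sup id) (bigJoin σ κ) (bigX σ κ) := by
  have hsub : ∀ S ∈ σ, ∀ A ∈ κ S, A ⊆ σ.sup id := fun S hS A hA =>
    ((hκ S hS).1.1 A hA).trans (le_sup (f := id) hS)
  refine ⟨isAC_bigJoin hsub, amle_of_subset subset_rfl, bigJoin_amle_iff.2 fun S hS B hB =>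
    exists_mem_bigX_superset hσ hκ (hsub S hS B hB) fun T hT => ?_⟩
  by_cases hTS : T = S
  · subst hTS
    exact ⟨B, hB, inter_subset_left⟩
  · obtain ⟨D, hD⟩ := (hκ T hT).nonempty (hne T hT)
    refine ⟨D, hD, ?_⟩
    have hST : Disjoint S T := hσ hS hT (Ne.symm hTS)
    rw [disjoint_iff_inter_eq_empty.1 (hST.mono_left ((hκ S hS).1.1 B hB))]
    exact empty_subset _

lemma proj_eq_of_mem_intervalSet (hσ : (σ : Set (Finset ℕ)).PairwiseDisjoint id)
    (hκ : ∀ S ∈ σ, IsSpanningAC S (κ S)) (hγ : γ ∈ intervalSet N (bigJoin σ κ) (bigX σ κ))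
    {S : Finset ℕ} (hS : S ∈ σ) : proj S γ = κ S :=
  amle_antisymm (isAntichain_maxels _) (isAC_iff.1 (hκ S hS).1).2
    (proj_amle_of_amle hγ.2.2 fun _ hX => ((mem_bigX_iff hσ hκ).1 hX).2 S hS)
    (amle_proj_of_amle (bigJoin_amle_iff.1 hγ.2.1 S hS) (hκ S hS).1.1)

lemma mem_intervalSet_proj (hσ : (σ : Set (Finset ℕ)).PairwiseDisjoint id)
    (hγ : IsSpanningAC (σ.sup id) γ) :
    (∀ S ∈ σ, IsSpanningAC S (proj S γ)) ∧
      γ ∈ intervalSet (σ.sup id) (bigJoin σ (proj · γ)) (bigX σ (proj · γ)) := by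
  have hκ : ∀ S ∈ σ, IsSpanningAC S (proj S γ) := fun S hS =>
    have hSN : S ⊆ σ.sup id := le_sup (f := id) hS
    ⟨isAC_proj, by rw [sp_proj, hγ.2, inter_eq_right.2 hSN]⟩
  exact ⟨hκ, hγ.1, bigJoin_amle_iff.2 fun _ _ => amle_proj_self, fun C hC =>
    exists_mem_bigX_superset hσ hκ (hγ.1.1 C hC) fun _ _ => exists_mem_proj_superset hC⟩

lemma sp_eq_of_mem_intervalSet (hκ : ∀ S ∈ σ, IsSpanningAC S (κ S))
    (hγ : γ ∈ intervalSet (σ.sup id) (bigJoin σ κ) β) : sp γ = σ.sup id :=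
  subset_antisymm (sp_subset_iff.2 hγ.1.1) <| Finset.sup_le fun S hS =>
    (hκ S hS).2 ▸ sp_mono_of_amle (bigJoin_amle_iff.1 hγ.2.1 S hS)

end Partition

/-- orthogonal coordinate system theorem, for a partition `σ` of `N`. -/
theorem orthogonal_coordinate_system (N : Finset ℕ) (σ : Fam)
    (hne : ∀ S ∈ σ, S.Nonempty)
    (hdisj : ∀ S ∈ σ, ∀ T ∈ σ, S ≠ T → Disjoint S T)
    (hcover : σ.sup id = N) :
    (∀ κf : Finset ℕ → Fam,
      (∀ S ∈ σ, IsAC S (κf S) ∧ sp (κf S) = S) →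
      (intervalSet N (bigJoin σ κf) (bigX σ κf)).Nonempty) ∧
    (∀ κ₁ κ₂ : Finset ℕ → Fam,
      (∀ S ∈ σ, IsAC S (κ₁ S) ∧ sp (κ₁ S) = S) →
      (∀ S ∈ σ, IsAC S (κ₂ S) ∧ sp (κ₂ S) = S) →
      (∃ γ : Fam, γ ∈ intervalSet N (bigJoin σ κ₁) (bigX σ κ₁) ∧
        γ ∈ intervalSet N (bigJoin σ κ₂) (bigX σ κ₂)) →
      ∀ S ∈ σ, κ₁ S = κ₂ S) ∧
    (∀ γ : Fam, (IsAC N γ ∧ sp γ = N) ↔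
      ∃ κf : Finset ℕ → Fam, (∀ S ∈ σ, IsAC S (κf S) ∧ sp (κf S) = S) ∧
        γ ∈ intervalSet N (bigJoin σ κf) (bigX σ κf)) := by
  subst hcover
  have hσ : (σ : Set (Finset ℕ)).PairwiseDisjoint id := fun S hS T hT hST => hdisj S hS T hT hST
  refine ⟨fun κ hκ => ⟨_, bigJoin_mem_intervalSet hne hσ hκ⟩, ?_, fun γ => ⟨fun hγ =>
    ⟨_, mem_intervalSet_proj hσ hγ⟩, fun ⟨_, hκ, hγ⟩ => ⟨hγ.1, sp_eq_of_mem_intervalSet hκ hγ⟩⟩⟩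
  rintro κ₁ κ₂ h₁ h₂ ⟨γ, hγ₁, hγ₂⟩ S hS
  rw [← proj_eq_of_mem_intervalSet hσ h₁ hγ₁ hS, proj_eq_of_mem_intervalSet hσ h₂ hγ₂ hS]
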